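/- Let Q_smo(U) = tr(Uᵀ D̃^{-1/2} L̃ D̃^{-1/2} U) and Q_igc(U) = tr(Uᵀ ¬D̃^{-1/2}(¬D̃ − ¬Ã)¬D̃^{-1/2} U), and Q_ggc = (Q_smo + Q_igc)/2. Then the gradient descent step on Q_ggc with learning rates η_smo = η_igc = 1/2 equals the average (U_smo + U_igc)/2 of the graph convolution output U_smo = D̃^{-1/2} Ã D̃^{-1/2} U and the IGC output U_igc = ¬D̃^{-1/2} ¬Ã ¬D̃^{-1/2} U. -/

import Mathlib

/-! Both degree matrices are positive (the self-loops of `Ã`, the `2I` in `¬D̃`), so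
`D̃^{-1/2} D̃ D̃^{-1/2} = I` and each gradient equals `2 (U - Û)` with `Û` the corresponding
normalized convolution of `U`. A step of size `1/2` along half of each gradient therefore
sends `U` to `(Û_smo + Û_igc) / 2`. -/

open Matrix BigOperators

namespace Matrix

variable {n m : Type*} [DecidableEq n]

theorem two_smul_one_add_diagonal (d : n → ℝ) :
    (2 : ℝ) • (1 : Matrix n n ℝ) + diagonal d = diagonal (fun i => d i + 2) := by
  rw [← diagonal_one, ← diagonal_smul, diagonal_add]
  congr 1
  funext i
  simp [add_comm]

variable [Fintype n]

theorem diagonal_inv_sqrt_mul_diagonal_mul_diagonal_inv_sqrt {w : n → ℝ} (hw : ∀ i, 0 < w i) :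
    diagonal (fun i => 1 / √(w i)) * diagonal w * diagonal (fun i => 1 / √(w i)) = 1 := by
  rw [diagonal_mul_diagonal, diagonal_mul_diagonal, ← diagonal_one]
  congr 1
  funext i
  have hsqrt : 0 < √(w i) := Real.sqrt_pos.mpr (hw i)
  field_simp
  exact (Real.sq_sqrt (hw i).le).symm

theorem mul_sub_mul_mul_eq_sub {R : Type*} [Ring R] {S D : Matrix n n R} (h : S * D * S = 1)
    (M : Matrix n n R) (U : Matrix n m R) : S * (D - M) * S * U = U - S * M * S * U := by
  rw [Matrix.mul_sub, Matrix.sub_mul, Matrix.sub_mul, h, Matrix.one_mul]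

theorem sum_add_one_apply_pos {A : Matrix n n ℝ} (hA : ∀ i j, 0 ≤ A i j) (i : n) :
    0 < ∑ j, (A + 1) i j := by
  simp only [add_apply, Finset.sum_add_distrib, one_apply, Finset.sum_ite_eq, Finset.mem_univ,
    if_true]
  linarith [Finset.sum_nonneg fun j (_ : j ∈ Finset.univ) => hA i j]

end Matrix

theorem zero_le_of_eq_zero_or_eq_one {x : ℝ} (h : x = 0 ∨ x = 1) : 0 ≤ x := by
  rcases h with h | h <;> simp [h]

theorem stmt14_general (n d : ℕ)
    (A : Matrix (Fin n) (Fin n) ℝ)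
    (h01A : ∀ i j, A i j = 0 ∨ A i j = 1)
    (At Dt Dh : Matrix (Fin n) (Fin n) ℝ)
    (hAt : At = A + 1)
    (hDt : Dt = Matrix.diagonal (fun i => ∑ j, At i j))
    (hDh : Dh = Matrix.diagonal (fun i => 1 / Real.sqrt (∑ j, At i j)))
    (B : Matrix (Fin n) (Fin n) ℝ)
    (h01B : ∀ i j, B i j = 0 ∨ B i j = 1)
    (degB : Fin n → ℝ) (hdegB : ∀ i, degB i = ∑ j, B i j)
    (Bt Et Eh : Matrix (Fin n) (Fin n) ℝ)
    (hEt : Et = (2 : ℝ) • (1 : Matrix (Fin n) (Fin n) ℝ) + Matrix.diagonal degB)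
    (hEh : Eh = Matrix.diagonal (fun i => 1 / Real.sqrt (degB i + 2)))
    (U : Matrix (Fin n) (Fin d) ℝ) :
    U - ((1 / 2 : ℝ) * (1 / 2)) • ((2 : ℝ) • (Dh * (Dt - At) * Dh * U))
      - ((1 / 2 : ℝ) * (1 / 2)) • ((2 : ℝ) • (Eh * (Et - Bt) * Eh * U)) =
      (1 / 2 : ℝ) • (Dh * At * Dh * U + Eh * Bt * Eh * U) := by
  have hDtDh : Dh * Dt * Dh = 1 := by
    rw [hDh, hDt]
    refine diagonal_inv_sqrt_mul_diagonal_mul_diagonal_inv_sqrt fun i => ?_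
    rw [hAt]
    exact sum_add_one_apply_pos (fun i j => zero_le_of_eq_zero_or_eq_one (h01A i j)) i
  have hEtEh : Eh * Et * Eh = 1 := by
    rw [hEh, hEt, two_smul_one_add_diagonal]
    refine diagonal_inv_sqrt_mul_diagonal_mul_diagonal_inv_sqrt fun i => ?_
    rw [hdegB]
    linarith [Finset.sum_nonneg fun j (_ : j ∈ Finset.univ) =>
      zero_le_of_eq_zero_or_eq_one (h01B i j)]
  rw [mul_sub_mul_mul_eq_sub hDtDh, mul_sub_mul_mul_eq_sub hEtEh]
  module

theorem stmt14 (n d : ℕ)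
    (A : Matrix (Fin n) (Fin n) ℝ)
    (hsymA : A.IsSymm) (h01A : ∀ i j, A i j = 0 ∨ A i j = 1)
    (At Dt Dh : Matrix (Fin n) (Fin n) ℝ)
    (hAt : At = A + 1)
    (hDt : Dt = Matrix.diagonal (fun i => ∑ j, At i j))
    (hDh : Dh = Matrix.diagonal (fun i => 1 / Real.sqrt (∑ j, At i j)))
    (B : Matrix (Fin n) (Fin n) ℝ)
    (hsymB : B.IsSymm) (h01B : ∀ i j, B i j = 0 ∨ B i j = 1) (hdiagB : ∀ i, B i i = 0)
    (degB : Fin n → ℝ) (hdegB : ∀ i, degB i = ∑ j, B i j)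
    (Bt Et Eh : Matrix (Fin n) (Fin n) ℝ)
    (hBt : Bt = (2 : ℝ) • (1 : Matrix (Fin n) (Fin n) ℝ) - B)
    (hEt : Et = (2 : ℝ) • (1 : Matrix (Fin n) (Fin n) ℝ) + Matrix.diagonal degB)
    (hEh : Eh = Matrix.diagonal (fun i => 1 / Real.sqrt (degB i + 2)))
    (U : Matrix (Fin n) (Fin d) ℝ) :
    U - ((1 / 2 : ℝ) * (1 / 2)) • ((2 : ℝ) • (Dh * (Dt - At) * Dh * U))
      - ((1 / 2 : ℝ) * (1 / 2)) • ((2 : ℝ) • (Eh * (Et - Bt) * Eh * U)) =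
      (1 / 2 : ℝ) • (Dh * At * Dh * U + Eh * Bt * Eh * U) :=
  stmt14_general n d A h01A At Dt Dh hAt hDt hDh B h01B degB hdegB Bt Et Eh hEt hEh U
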